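/- Let N ∈ ℕ, b₀,…,b_N ∈ ℂ with b_N ≠ 0, and define the degree-N polynomial g(ξ) = Σ_{n=0}^N Σ_{k=0}^n b_n [C(n,k)/(α₁)_k] ξ(ξ−1)⋯(ξ−k+1), with roots −λ₁,…,−λ_N (counted with multiplicity). Then Σ_{n=0}^N b_n ₚF_q(α₁+n, α₂,…,αₚ; γ; z) = (b_N/(α₁)_N)·(θ+λ₁)⋯(θ+λ_N) F(z), where θ = z d/dz and F(z) = ₚF_q(α₁,…,αₚ; γ; z). In particular, if no λ_i is a nonpositive integer, this equals (b_N/(α₁)_N)·λ₁⋯λ_N · ₚ₊ₙF_{q+N}(α₁,…,αₚ, λ₁+1,…,λ_N+1; γ₁,…,γ_q, λ₁,…,λ_N; z). -/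

import Mathlib

/-- Pochhammer symbol `(x)_k` (rising factorial). -/
noncomputable def ascp (x : ℂ) (k : ℕ) : ℂ := (ascPochhammer ℂ k).eval x

/-- The generalized hypergeometric function `ₚF_q(a; b; z)` as a formal power series:
its `k`-th coefficient is `(a₁)_k ⋯ (aₚ)_k / ((b₁)_k ⋯ (b_q)_k k!)`. -/
noncomputable def pFq (a b : List ℂ) : PowerSeries ℂ :=
  PowerSeries.mk fun k =>
    (a.map fun x => ascp x k).prod / ((b.map fun x => ascp x k).prod * (Nat.factorial k : ℂ))

/-- The Euler operator `θ = z d/dz` on formal power series. -/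
noncomputable def thetaOp (F : PowerSeries ℂ) : PowerSeries ℂ :=
  PowerSeries.X * PowerSeries.derivativeFun F

/-- The operator `(θ + λ₁)⋯(θ + λ_N)` for a list of shifts. -/
noncomputable def thetaShiftProd : List ℂ → PowerSeries ℂ → PowerSeries ℂ
  | [], F => F
  | l :: ls, F => thetaOp (thetaShiftProd ls F) + l • thetaShiftProd ls F

/-!
On `z^m` the operator `θ` acts as multiplication by `m`, so everything is compared coefficientwise.
Applying the falling-factorial Vandermonde identity to `(α + m)_n` gives the contiguity relation
`(α + n)_m = (α)_m · Σ_k C(n,k) m(m-1)⋯(m-k+1) / (α)_k`, so the `m`-th coefficient of the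
combination is `g(m)` times that of `F`, and `g(m) = (b_N / (α₁)_N) ∏ (m + λ_i)`.
The second form follows from `λ (λ + 1)_m = (λ)_{m+1} = (λ)_m (λ + m)`.
-/

open Finset

open Polynomial in
lemma descPochhammer_eval_add {R : Type*} [CommRing R] (x y : R) (n : ℕ) :
    (descPochhammer R n).eval (x + y) = ∑ j ∈ range (n + 1),
      n.choose j * ((descPochhammer R j).eval x * (descPochhammer R (n - j)).eval y) := by
  have key := Ring.descPochhammer_smeval_add n (Commute.all x y)
  simp only [← aeval_eq_smeval, aeval_def, ← eval_map, descPochhammer_map] at key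
  rw [key, Nat.sum_antidiagonal_eq_sum_range_succ_mk]

lemma ascp_succ (x : ℂ) (k : ℕ) : ascp x (k + 1) = ascp x k * (x + k) :=
  ascPochhammer_succ_eval k x

lemma ascp_succ_left (x : ℂ) (k : ℕ) : ascp x (k + 1) = x * ascp (x + 1) k := by
  simp [ascp, ascPochhammer_succ_left]

lemma ascp_ne_zero {x : ℂ} (h : ∀ m : ℕ, x ≠ -(m : ℂ)) (k : ℕ) : ascp x k ≠ 0 := by
  induction k with
  | zero => simp [ascp]
  | succ k ih =>
    exact ascp_succ x k ▸ mul_ne_zero ih fun hx => h k (eq_neg_of_add_eq_zero_left hx)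

lemma ascp_mul_ascp_add (x : ℂ) (n m : ℕ) : ascp x n * ascp (x + n) m = ascp x (n + m) := by
  simp [ascp, ← ascPochhammer_mul]

lemma ascp_eq_descPochhammer_eval (x : ℂ) (n : ℕ) :
    ascp x n = (descPochhammer ℂ n).eval (x + n - 1) := by
  rw [ascp, descPochhammer_eval_eq_ascPochhammer]
  ring_nf

lemma ascp_add_eq_sum (x y : ℂ) (n : ℕ) :
    ascp (x + y) n = ∑ j ∈ range (n + 1),
      n.choose j * (∏ i ∈ range j, (y - i)) * ascp (x + j) (n - j) := by
  rw [ascp_eq_descPochhammer_eval, show x + y + n - 1 = y + (x + n - 1) by ring,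
    descPochhammer_eval_add]
  refine sum_congr rfl fun j hj => ?_
  have hjn : j ≤ n := Nat.lt_succ_iff.mp (mem_range.mp hj)
  rw [descPochhammer_eval_eq_prod_range, ascp_eq_descPochhammer_eval, Nat.cast_sub hjn]
  ring_nf

lemma ascp_add_natCast {α : ℂ} (hα : ∀ m : ℕ, α ≠ -(m : ℂ)) (n k : ℕ) :
    ascp (α + n) k = ascp α k *
      ∑ j ∈ range (n + 1), n.choose j / ascp α j * ∏ i ∈ range j, ((k : ℂ) - i) := by
  have hsplit : ∀ j ∈ range (n + 1), ascp α n = ascp α j * ascp (α + j) (n - j) :=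
    fun j hj => by
      rw [ascp_mul_ascp_add, Nat.add_sub_cancel' (Nat.lt_succ_iff.mp (mem_range.mp hj))]
  apply mul_left_cancel₀ (ascp_ne_zero hα n)
  calc ascp α n * ascp (α + n) k = ascp α k * ascp (α + k) n := by
        rw [ascp_mul_ascp_add, ascp_mul_ascp_add, add_comm]
    _ = _ := by
        rw [ascp_add_eq_sum, mul_sum, mul_sum, mul_sum]
        refine sum_congr rfl fun j hj => ?_
        rw [hsplit j hj]
        field_simp [ascp_ne_zero hα j]

open PowerSeries

lemma coeff_pFq_cons (a : ℂ) (as bs : List ℂ) (m : ℕ) :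
    coeff m (pFq (a :: as) bs) = ascp a m * coeff m (pFq as bs) := by
  simp only [pFq, coeff_mk, List.map_cons, List.prod_cons, mul_div_assoc]

lemma coeff_pFq_add_natCast {α : ℂ} (hα : ∀ m : ℕ, α ≠ -(m : ℂ)) (as bs : List ℂ)
    (n m : ℕ) :
    coeff m (pFq ((α + n) :: as) bs) =
      (∑ j ∈ range (n + 1), n.choose j / ascp α j * ∏ i ∈ range j, ((m : ℂ) - i))
        * coeff m (pFq (α :: as) bs) := by
  rw [coeff_pFq_cons, coeff_pFq_cons, ascp_add_natCast hα]
  ring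

lemma coeff_thetaOp (F : PowerSeries ℂ) (m : ℕ) : coeff m (thetaOp F) = m * coeff m F := by
  cases m with
  | zero => simp [thetaOp]
  | succ m =>
    rw [thetaOp, coeff_succ_X_mul]
    change coeff m (derivative ℂ F) = _
    rw [coeff_derivative]
    push_cast
    ring

lemma coeff_thetaShiftProd (l : List ℂ) (F : PowerSeries ℂ) (m : ℕ) :
    coeff m (thetaShiftProd l F) = (l.map ((m : ℂ) + ·)).prod * coeff m F := by
  induction l with
  | nil => simp [thetaShiftProd]
  | cons a l ih =>
    simp only [thetaShiftProd, map_add, coeff_thetaOp, ih, List.map_cons, List.prod_cons,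
      map_smul, smul_eq_mul]
    ring

lemma thetaShiftProd_pFq (l as bs : List ℂ) (hl : ∀ x ∈ l, ∀ m : ℕ, x ≠ -(m : ℂ)) :
    thetaShiftProd l (pFq as bs) = C l.prod * pFq (as ++ l.map (· + 1)) (bs ++ l) := by
  ext m
  have hD : (l.map (ascp · m)).prod ≠ 0 :=
    List.prod_ne_zero fun h => by
      obtain ⟨x, hx, hx0⟩ := List.mem_map.mp h
      exact ascp_ne_zero (hl x hx) m hx0
  have hshift : l.prod * (l.map fun x => ascp (x + 1) m).prod
      = (l.map (ascp · m)).prod * (l.map ((m : ℂ) + ·)).prod :=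
    calc l.prod * (l.map fun x => ascp (x + 1) m).prod
        = (l.map fun x => ascp x (m + 1)).prod := by
          simp only [ascp_succ_left, List.prod_map_mul, List.map_id']
      _ = _ := by simp only [ascp_succ, List.prod_map_mul, add_comm]
  simp only [coeff_thetaShiftProd, coeff_C_mul, pFq, coeff_mk, List.map_append, List.prod_append,
    List.map_map]
  rw [Function.comp_def]
  field_simp
  rw [mul_assoc _ l.prod, hshift]
  ring

theorem pFq_multi_term_combination_general (N : ℕ) (α₁ : ℂ) (αs γs : List ℂ) (b : ℕ → ℂ)
    (hα : ∀ m : ℕ, α₁ ≠ -(m : ℂ)) (lam : Fin N → ℂ)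
    (hroots : ∀ ξ : ℂ,
      ∑ n ∈ Finset.range (N + 1), ∑ k ∈ Finset.range (n + 1),
          b n * (n.choose k : ℂ) / ascp α₁ k * ∏ j ∈ Finset.range k, (ξ - j)
        = b N / ascp α₁ N * ∏ i : Fin N, (ξ + lam i)) :
    (∑ n ∈ Finset.range (N + 1), PowerSeries.C (R := ℂ) (b n) * pFq ((α₁ + n) :: αs) γs
      = PowerSeries.C (R := ℂ) (b N / ascp α₁ N)
          * thetaShiftProd (List.ofFn lam) (pFq (α₁ :: αs) γs))
    ∧ ((∀ i : Fin N, ∀ m : ℕ, lam i ≠ -(m : ℂ)) →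
      ∑ n ∈ Finset.range (N + 1), PowerSeries.C (R := ℂ) (b n) * pFq ((α₁ + n) :: αs) γs
        = PowerSeries.C (R := ℂ) (b N / ascp α₁ N * ∏ i : Fin N, lam i)
            * pFq ((α₁ :: αs) ++ (List.ofFn lam).map (· + 1)) (γs ++ List.ofFn lam)) := by
  have hθ : ∑ n ∈ range (N + 1), C (b n) * pFq ((α₁ + n) :: αs) γs
      = C (b N / ascp α₁ N) * thetaShiftProd (List.ofFn lam) (pFq (α₁ :: αs) γs) := by
    ext m
    simp only [map_sum, coeff_C_mul, coeff_pFq_add_natCast hα, coeff_thetaShiftProd,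
      List.map_ofFn, List.prod_ofFn, Function.comp_def]
    calc _ = (∑ n ∈ range (N + 1), ∑ k ∈ range (n + 1),
          b n * (n.choose k : ℂ) / ascp α₁ k * ∏ j ∈ range k, ((m : ℂ) - j))
            * coeff m (pFq (α₁ :: αs) γs) := by
          simp only [sum_mul, mul_sum]
          exact sum_congr rfl fun n _ => sum_congr rfl fun k _ => by ring
      _ = _ := by rw [hroots]; ring
  refine ⟨hθ, fun hlam => ?_⟩
  have hlam_mem : ∀ x ∈ List.ofFn lam, ∀ m : ℕ, x ≠ -(m : ℂ) := by
    simpa only [List.mem_ofFn, forall_exists_index, forall_apply_eq_imp_iff]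
  rw [hθ, thetaShiftProd_pFq _ _ _ hlam_mem, ← mul_assoc, ← map_mul, List.prod_ofFn]

/-- an `(N+1)`-term contiguous combination
`Σ_{n=0}^N b_n ₚF_q(α₁+n, …; γ; z)` equals `(b_N/(α₁)_N)(θ+λ₁)⋯(θ+λ_N) F(z)`, where
`−λ₁,…,−λ_N` are the roots of the polynomial `g`; and, when no `λ_i` is a nonpositive
integer, it equals `(Σ b_k) · ₚ₊ₙF_{q+N}` with the extra parameter pairs `(λ_i+1; λ_i)`. -/
theorem pFq_multi_term_combination (N : ℕ) (α₁ : ℂ) (αs γs : List ℂ) (b : ℕ → ℂ)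
    (hbN : b N ≠ 0) (hα : ∀ m : ℕ, α₁ ≠ -(m : ℂ))
    (hγ : ∀ γ ∈ γs, ∀ m : ℕ, γ ≠ -(m : ℂ)) (lam : Fin N → ℂ)
    (hroots : ∀ ξ : ℂ,
      ∑ n ∈ Finset.range (N + 1), ∑ k ∈ Finset.range (n + 1),
          b n * (n.choose k : ℂ) / ascp α₁ k * ∏ j ∈ Finset.range k, (ξ - j)
        = b N / ascp α₁ N * ∏ i : Fin N, (ξ + lam i)) :
    (∑ n ∈ Finset.range (N + 1), PowerSeries.C (R := ℂ) (b n) * pFq ((α₁ + n) :: αs) γs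
      = PowerSeries.C (R := ℂ) (b N / ascp α₁ N)
          * thetaShiftProd (List.ofFn lam) (pFq (α₁ :: αs) γs))
    ∧ ((∀ i : Fin N, ∀ m : ℕ, lam i ≠ -(m : ℂ)) →
      ∑ n ∈ Finset.range (N + 1), PowerSeries.C (R := ℂ) (b n) * pFq ((α₁ + n) :: αs) γs
        = PowerSeries.C (R := ℂ) (b N / ascp α₁ N * ∏ i : Fin N, lam i)
            * pFq ((α₁ :: αs) ++ (List.ofFn lam).map (· + 1)) (γs ++ List.ofFn lam)) :=
  pFq_multi_term_combination_general N α₁ αs γs b hα lam hroots
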